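/- Let D be a division ring, m, n, p, q be positive integers, and φ : M_{m×n}(D) → M_{p×q}(D) be an adjacency preserver with φ(0) = 0 that is not degenerate with respect to 0. Then one of the following two cases holds: (i) there are nonconstant maps α : P(D^n) → P(D^q) and β : P(ᵗD^m) → P(ᵗD^p) such that φ(R_d) ⊆ R_{α(d)} for all d ∈ P(D^n) and φ(L_e) ⊆ L_{β(e)} for all e ∈ P(ᵗD^m); (ii) there are nonconstant maps α : P(D^n) → P(ᵗD^p) and β : P(ᵗD^m) → P(D^q) such that φ(R_d) ⊆ L_{α(d)} for all d ∈ P(D^n) and φ(L_e) ⊆ R_{β(e)} for all e ∈ P(ᵗD^m). -/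
import Mathlib


open Matrix

variable {D : Type*} [DivisionRing D]

/-- The rank of a matrix over a division ring: the dimension of its row space,
i.e. of the left `D`-subspace of `D^n` spanned by the rows. -/
noncomputable def rowRank {m n : ℕ} (A : Matrix (Fin m) (Fin n) D) : ℕ :=
  Module.finrank D (Submodule.span D (Set.range fun i => A i))

/-- Two matrices are adjacent if their difference has rank one. -/
def Adjacent {m n : ℕ} (A B : Matrix (Fin m) (Fin n) D) : Prop :=
  rowRank (A - B) = 1

/-- `R(x)`: the set of matrices of the form `ᵗu x` for a fixed row vector `x`. -/
def Rvec {m n : ℕ} (x : Fin n → D) : Set (Matrix (Fin m) (Fin n) D) :=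
  { M | ∃ u : Fin m → D, ∀ i j, M i j = u i * x j }

/-- `L(ᵗy)`: the set of matrices of the form `ᵗy v` for a fixed column vector `ᵗy`. -/
def Lvec {m n : ℕ} (y : Fin m → D) : Set (Matrix (Fin m) (Fin n) D) :=
  { M | ∃ v : Fin n → D, ∀ i j, M i j = y i * v j }

/-- `R_d`: the matrices whose row space is contained in `d`. -/
def Rsub {m n : ℕ} (d : Submodule D (Fin n → D)) : Set (Matrix (Fin m) (Fin n) D) :=
  { M | ∀ i, M i ∈ d }

/-- `L_e`: the matrices whose column space (a right subspace, i.e. a `Dᵐᵒᵖ`-submodule)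
is contained in `e`. -/
def Lsub {m n : ℕ} (e : Submodule Dᵐᵒᵖ (Fin m → D)) : Set (Matrix (Fin m) (Fin n) D) :=
  { M | ∀ j, (fun i => M i j) ∈ e }

/-- The orthogonal set of a set `e` of column vectors. -/
def perpSet {m : ℕ} (e : Set (Fin m → D)) : Set (Fin m → D) :=
  { u | ∀ v ∈ e, ∑ i, u i * v i = 0 }

/-- The `p × q` matrix with upper-left block `B` and zeros elsewhere. -/
def pad {m n : ℕ} (p q : ℕ) (B : Matrix (Fin m) (Fin n) D) :
    Matrix (Fin p) (Fin q) D :=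
  Matrix.of fun i j =>
    if hi : (i : ℕ) < m then if hj : (j : ℕ) < n then B ⟨i, hi⟩ ⟨j, hj⟩ else 0 else 0

/-- `φ` is degenerate with respect to `A`. -/
def DegenerateAt {m n p q : ℕ} (φ : Matrix (Fin m) (Fin n) D → Matrix (Fin p) (Fin q) D)
    (A : Matrix (Fin m) (Fin n) D) : Prop :=
  ∃ x : Fin p → D, x ≠ 0 ∧ ∃ y : Fin q → D, y ≠ 0 ∧
    ∀ M : Matrix (Fin m) (Fin n) D, rowRank M ≤ 1 →
      φ (A + M) - φ A ∈ Rvec y ∪ Lvec x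

/-- `φ` is degenerate: degenerate with respect to every matrix. -/
def Degenerate {m n p q : ℕ} (φ : Matrix (Fin m) (Fin n) D → Matrix (Fin p) (Fin q) D) :
    Prop :=
  ∀ A, DegenerateAt φ A

/-- A map (sending `0` to `0`) is degenerate with respect to `0` iff it maps every matrix of
rank at most one into `R(y) ∪ L(ᵗx)` for some nonzero `y`, `x`. -/
def DegZero {m n p q : ℕ} (φ : Matrix (Fin m) (Fin n) D → Matrix (Fin p) (Fin q) D) :
    Prop :=
  ∃ x : Fin p → D, x ≠ 0 ∧ ∃ y : Fin q → D, y ≠ 0 ∧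
    ∀ M : Matrix (Fin m) (Fin n) D, rowRank M ≤ 1 → φ M ∈ Rvec y ∪ Lvec x

/-- A standard adjacency preserver. -/
def Standard {m n p q : ℕ} (φ : Matrix (Fin m) (Fin n) D → Matrix (Fin p) (Fin q) D) :
    Prop :=
  (m ≤ p ∧ n ≤ q ∧ ∃ τ : D ≃+* D, ∃ T : Matrix (Fin p) (Fin p) D,
    ∃ S : Matrix (Fin q) (Fin q) D, ∃ R : Matrix (Fin p) (Fin q) D,
    IsUnit T ∧ IsUnit S ∧ ∀ A, φ A = T * pad p q (A.map τ) * S + R) ∨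
  (n ≤ p ∧ m ≤ q ∧ ∃ σ : D → D, Function.Bijective σ ∧ σ 1 = 1 ∧
    (∀ a b, σ (a + b) = σ a + σ b) ∧ (∀ a b, σ (a * b) = σ b * σ a) ∧
    ∃ T : Matrix (Fin p) (Fin p) D, ∃ S : Matrix (Fin q) (Fin q) D,
    ∃ R : Matrix (Fin p) (Fin q) D, IsUnit T ∧ IsUnit S ∧
    ∀ A, φ A = T * pad p q (A.map σ).transpose * S + R)

/-- A division ring is EAS if every (unital) ring endomorphism of it is surjective. -/
def EAS (D : Type*) [DivisionRing D] : Prop :=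
  ∀ f : D →+* D, Function.Surjective f

/-- A set of matrices is adjacent if any two distinct members are adjacent. -/
def IsAdjacentSet {m n : ℕ} (S : Set (Matrix (Fin m) (Fin n) D)) : Prop :=
  ∀ A ∈ S, ∀ B ∈ S, A ≠ B → Adjacent A B

theorem rowRank_zero {m n : ℕ} : rowRank (0 : Matrix (Fin m) (Fin n) D) = 0 := by
  unfold rowRank
  have : (Set.range fun i => (0 : Matrix (Fin m) (Fin n) D) i) ⊆ {0} := by
    rintro _ ⟨i, rfl⟩; rfl
  have h := Submodule.span_mono (R := D) this
  rw [Submodule.span_singleton_eq_bot.2 rfl, le_bot_iff] at h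
  rw [h, finrank_bot D _]

theorem eq_zero_of_rowRank_eq_zero {m n : ℕ} {A : Matrix (Fin m) (Fin n) D}
    (h : rowRank A = 0) : A = 0 := by
  unfold rowRank at h
  have hfin : Module.Finite D (Submodule.span D (Set.range fun i => A i)) := by
    apply Module.Finite.span_of_finite
    exact Set.finite_range _
  rw [Submodule.finrank_eq_zero] at h
  ext i j
  have : A i ∈ (⊥ : Submodule D (Fin n → D)) := by
    rw [← h]; exact Submodule.subset_span ⟨i, rfl⟩
  rw [Submodule.mem_bot] at this
  exact congrFun this j

theorem rowRank_le_one_iff {m n : ℕ} {A : Matrix (Fin m) (Fin n) D} :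
    rowRank A ≤ 1 ↔ ∃ (u : Fin m → D) (x : Fin n → D), ∀ i j, A i j = u i * x j := by
  constructor
  · intro h
    rcases Nat.le_one_iff_eq_zero_or_eq_one.1 h with h0 | h1
    · exact ⟨0, 0, by simp [eq_zero_of_rowRank_eq_zero h0]⟩
    · unfold rowRank at h1
      set W := Submodule.span D (Set.range fun i => A i) with hW
      have hfin : Module.Finite D W := Module.Finite.span_of_finite _ (Set.finite_range _)
      have hne : W ≠ ⊥ := by
        intro hb
        rw [hb, finrank_bot D _] at h1; exact one_ne_zero h1.symm
      obtain ⟨v, hvW, hv0⟩ := Submodule.exists_mem_ne_zero_of_ne_bot hne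
      have hle : Submodule.span D {v} ≤ W := by
        rw [Submodule.span_le, Set.singleton_subset_iff]; exact hvW
      have heq : Submodule.span D {v} = W := by
        apply Submodule.eq_of_le_of_finrank_le hle
        rw [h1, finrank_span_singleton hv0]
      have hrow : ∀ i, ∃ c : D, c • v = A i := by
        intro i
        have : A i ∈ W := Submodule.subset_span ⟨i, rfl⟩
        rw [← heq, Submodule.mem_span_singleton] at this
        exact this
      refine ⟨fun i => (hrow i).choose, v, fun i j => ?_⟩
      have := (hrow i).choose_spec
      exact (congrFun this j).symm
  · rintro ⟨u, x, huv⟩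
    unfold rowRank
    have hle : Submodule.span D (Set.range fun i => A i) ≤ Submodule.span D {x} := by
      rw [Submodule.span_le]
      rintro _ ⟨i, rfl⟩
      rw [SetLike.mem_coe, Submodule.mem_span_singleton]
      exact ⟨u i, by funext j; exact (huv i j).symm⟩
    have : Module.Finite D (Submodule.span D ({x} : Set (Fin n → D))) :=
      Module.Finite.span_of_finite _ (Set.finite_singleton _)
    calc Module.finrank D (Submodule.span D (Set.range fun i => A i))
        ≤ Module.finrank D (Submodule.span D {x}) := Submodule.finrank_mono hle
      _ ≤ 1 := finrank_span_le_card _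

theorem exists_entry_ne {m n : ℕ} {A : Matrix (Fin m) (Fin n) D} (h : A ≠ 0) :
    ∃ i j, A i j ≠ 0 := by
  by_contra hc
  push_neg at hc
  exact h (by ext i j; exact hc i j)


theorem lemC {m n : ℕ} {u v : Fin m → D} {x y : Fin n → D} {A B : Matrix (Fin m) (Fin n) D}
    (hA : ∀ i j, A i j = u i * x j) (hB : ∀ i j, B i j = v i * y j)
    (hA0 : A ≠ 0) (hB0 : B ≠ 0) (hAB : A ≠ B) (h : rowRank (A - B) ≤ 1) :
    (∃ c : D, c ≠ 0 ∧ ∀ j, y j = c * x j) ∨ (∃ c : D, c ≠ 0 ∧ ∀ i, v i = u i * c) := by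
  obtain ⟨w, z, hwz⟩ := rowRank_le_one_iff.1 h
  have hwz' : ∀ i j, u i * x j - v i * y j = w i * z j := by
    intro i j
    have h' := hwz i j
    rw [Matrix.sub_apply, hA i j, hB i j] at h'
    exact h'
  by_cases hyx : ∃ c : D, c ≠ 0 ∧ ∀ j, y j = c * x j
  · exact Or.inl hyx
  push_neg at hyx
  right
  obtain ⟨i0, j0, hA0'⟩ := exists_entry_ne hA0
  rw [hA i0 j0] at hA0'
  have hu0 : u i0 ≠ 0 := fun hc => hA0' (by rw [hc, zero_mul])
  have hx0 : x j0 ≠ 0 := fun hc => hA0' (by rw [hc, mul_zero])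
  obtain ⟨i1, j1, hB0'⟩ := exists_entry_ne hB0
  rw [hB i1 j1] at hB0'
  have hv1 : v i1 ≠ 0 := fun hc => hB0' (by rw [hc, zero_mul])
  have hy1 : y j1 ≠ 0 := fun hc => hB0' (by rw [hc, mul_zero])
  have hrow : ∃ i2 j2, u i2 * x j2 - v i2 * y j2 ≠ 0 := by
    by_contra hc
    push_neg at hc
    apply hAB
    ext i j
    rw [hA i j, hB i j, ← sub_eq_zero]
    exact hc i j
  obtain ⟨i2, j2, h2⟩ := hrow
  have hw2 : w i2 ≠ 0 := by
    intro hc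
    apply h2
    rw [hwz' i2 j2, hc, zero_mul]
  obtain ⟨a, ha⟩ : ∃ a : D, a = (w i2)⁻¹ * u i2 := ⟨_, rfl⟩
  obtain ⟨b, hb⟩ : ∃ b : D, b = (w i2)⁻¹ * v i2 := ⟨_, rfl⟩
  have hz : ∀ j, z j = a * x j - b * y j := by
    intro j
    have h' := hwz' i2 j
    have h'' : z j = (w i2)⁻¹ * (u i2 * x j - v i2 * y j) := by
      rw [h', inv_mul_cancel_left₀ hw2]
    rw [mul_sub] at h''
    rw [ha, hb, mul_assoc, mul_assoc]
    exact h'' 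
  have key : ∀ i j, (u i - w i * a) * x j = (v i - w i * b) * y j := by
    intro i j
    have h1 := hwz' i j
    rw [hz j, mul_sub, ← mul_assoc, ← mul_assoc] at h1
    rw [sub_mul, sub_mul]
    exact sub_eq_sub_iff_sub_eq_sub.mp h1
  have hvb : ∀ i, v i = w i * b := by
    intro i
    by_contra he'
    have he : v i - w i * b ≠ 0 := sub_ne_zero.mpr he'
    have hyeq : ∀ j, y j = ((v i - w i * b)⁻¹ * (u i - w i * a)) * x j := by
      intro j
      rw [mul_assoc, key i j, inv_mul_cancel_left₀ he]
    set c := (v i - w i * b)⁻¹ * (u i - w i * a) with hc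
    by_cases hc0 : c = 0
    · exact hy1 (by rw [hyeq j1, hc0, zero_mul])
    · obtain ⟨j', hj'⟩ := hyx c hc0
      exact hj' (hyeq j')
  have hua : ∀ i, u i = w i * a := by
    intro i
    have h3 := key i j0
    rw [hvb i, sub_self, zero_mul] at h3
    rcases mul_eq_zero.mp h3 with h4 | h4
    · exact (sub_eq_zero.mp h4)
    · exact absurd h4 hx0
  have ha0 : a ≠ 0 := by
    intro hc
    apply hu0
    rw [hua i0, hc, mul_zero]
  have hb0 : b ≠ 0 := by
    intro hc
    apply hv1
    rw [hvb i1, hc, mul_zero]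
  refine ⟨a⁻¹ * b, mul_ne_zero (inv_ne_zero ha0) hb0, fun i => ?_⟩
  have hw : w i = u i * a⁻¹ := by
    rw [hua i, mul_assoc, mul_inv_cancel₀ ha0, mul_one]
  rw [hvb i, hw, mul_assoc]


theorem decomp_of_mem_Rvec {m n : ℕ} {x : Fin n → D} {A : Matrix (Fin m) (Fin n) D}
    (h : A ∈ Rvec x) (h0 : A ≠ 0) :
    ∃ u : Fin m → D, u ≠ 0 ∧ (∀ i j, A i j = u i * x j) := by
  obtain ⟨u, hu⟩ := h
  refine ⟨u, fun hc => ?_, hu⟩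
  apply h0
  ext i j
  rw [hu i j, congrFun hc i]
  simp

theorem mem_Rvec_of_scal {m n : ℕ} {x y : Fin n → D} {c : D}
    (hc : ∀ j, y j = c * x j) {A : Matrix (Fin m) (Fin n) D} (h : A ∈ Rvec y) :
    A ∈ Rvec x := by
  obtain ⟨u, hu⟩ := h
  exact ⟨fun i => u i * c, fun i j => by rw [hu i j, hc j, mul_assoc]⟩

theorem mem_Lvec_of_scal {m n : ℕ} {t s : Fin m → D} {c : D}
    (hc : ∀ i, s i = t i * c) {A : Matrix (Fin m) (Fin n) D} (h : A ∈ Lvec s) :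
    A ∈ Lvec t := by
  obtain ⟨v, hv⟩ := h
  refine ⟨fun j => c * v j, fun i j => ?_⟩
  rw [hv i j, hc i, mul_assoc]

/-- If a nonzero matrix lies in two `Rvec`s, the two row vectors are proportional. -/
theorem scal_of_both_R {m n : ℕ} {x x' : Fin n → D} {Z : Matrix (Fin m) (Fin n) D}
    (h0 : Z ≠ 0) (h1 : Z ∈ Rvec x) (h2 : Z ∈ Rvec x') :
    ∃ c : D, c ≠ 0 ∧ ∀ j, x' j = c * x j := by
  obtain ⟨u, hu0, hu⟩ := decomp_of_mem_Rvec h1 h0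
  obtain ⟨u', hu0', hu'⟩ := decomp_of_mem_Rvec h2 h0
  obtain ⟨i, j, hij⟩ := exists_entry_ne h0
  have hui : u i ≠ 0 := fun hc => hij (by rw [hu i j, hc, zero_mul])
  have hui' : u' i ≠ 0 := fun hc => hij (by rw [hu' i j, hc, zero_mul])
  refine ⟨(u' i)⁻¹ * u i, mul_ne_zero (inv_ne_zero hui') hui, fun j' => ?_⟩
  have : u' i * x' j' = u i * x j' := by rw [← hu' i j', ← hu i j']
  rw [mul_assoc, ← this, inv_mul_cancel_left₀ hui']

/-- If a nonzero matrix lies in two `Lvec`s, the two column vectors are proportional. -/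
theorem scal_of_both_L {m n : ℕ} {t t' : Fin m → D} {Z : Matrix (Fin m) (Fin n) D}
    (h0 : Z ≠ 0) (h1 : Z ∈ Lvec t) (h2 : Z ∈ Lvec t') :
    ∃ c : D, c ≠ 0 ∧ ∀ i, t' i = t i * c := by
  obtain ⟨v, hv⟩ := h1
  obtain ⟨v', hv'⟩ := h2
  obtain ⟨i, j, hij⟩ := exists_entry_ne h0
  have hvj : v j ≠ 0 := fun hc => hij (by rw [hv i j, hc, mul_zero])
  have hvj' : v' j ≠ 0 := fun hc => hij (by rw [hv' i j, hc, mul_zero])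
  refine ⟨v j * (v' j)⁻¹, mul_ne_zero hvj (inv_ne_zero hvj'), fun i' => ?_⟩
  have : t' i' * v' j = t i' * v j := by rw [← hv' i' j, ← hv i' j]
  rw [← mul_assoc, ← this, mul_assoc, mul_inv_cancel₀ hvj', mul_one]

/-- clique lemma: a nonempty set of pairwise-adjacent nonzero rank-one matrices lies in a
single `Rvec` or a single `Lvec`. -/
theorem cliqueLem {m n : ℕ} {S : Set (Matrix (Fin m) (Fin n) D)}
    (hS : ∀ A ∈ S, A ≠ 0 ∧ rowRank A ≤ 1)
    (hadj : ∀ A ∈ S, ∀ B ∈ S, A ≠ B → rowRank (A - B) ≤ 1)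
    (hne : S.Nonempty) :
    (∃ y : Fin n → D, y ≠ 0 ∧ S ⊆ Rvec y) ∨ (∃ u : Fin m → D, u ≠ 0 ∧ S ⊆ Lvec u) := by
  obtain ⟨A0, hA0S⟩ := hne
  obtain ⟨hA00, hA0r⟩ := hS A0 hA0S
  obtain ⟨u0, x0, hux0⟩ := rowRank_le_one_iff.1 hA0r
  have hu00 : u0 ≠ 0 := by
    rintro rfl; exact hA00 (by ext i j; rw [hux0 i j]; exact zero_mul _)
  have hx00 : x0 ≠ 0 := by
    rintro rfl; exact hA00 (by ext i j; rw [hux0 i j]; exact mul_zero _)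
  by_cases hall : ∀ B ∈ S, B ∈ Rvec x0
  · exact Or.inl ⟨x0, hx00, hall⟩
  push_neg at hall
  obtain ⟨B0, hB0S, hB0n⟩ := hall
  obtain ⟨hB00, hB0r⟩ := hS B0 hB0S
  obtain ⟨v0, y0, hvy0⟩ := rowRank_le_one_iff.1 hB0r
  have hB0A0 : B0 ≠ A0 := fun hc => hB0n (hc ▸ ⟨u0, hux0⟩)
  have hcol0 : ∃ c : D, c ≠ 0 ∧ ∀ i, v0 i = u0 i * c := by
    rcases lemC hux0 hvy0 hA00 hB00 (Ne.symm hB0A0)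
        (hadj A0 hA0S B0 hB0S (Ne.symm hB0A0)) with hrowc | hcolc
    · obtain ⟨c, hc0, hc⟩ := hrowc
      exact absurd (mem_Rvec_of_scal hc ⟨v0, hvy0⟩) hB0n
    · exact hcolc
  obtain ⟨c0, hc00, hc0⟩ := hcol0
  right
  refine ⟨u0, hu00, fun C hCS => ?_⟩
  obtain ⟨hC0, hCr⟩ := hS C hCS
  obtain ⟨w, z, hwz⟩ := rowRank_le_one_iff.1 hCr
  by_cases hCx0 : C ∈ Rvec x0
  · have hCB0 : C ≠ B0 := fun hc => hB0n (hc ▸ hCx0)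
    rcases lemC hwz hvy0 hC0 hB00 hCB0 (hadj C hCS B0 hB0S hCB0) with hrowc | hcolc
    · -- y0 proportional to z, z proportional to x0 ⇒ B0 ∈ Rvec x0, contradiction
      exfalso
      obtain ⟨c, hc0', hc⟩ := hrowc
      have hBz : B0 ∈ Rvec z := mem_Rvec_of_scal hc ⟨v0, hvy0⟩
      obtain ⟨c', hc0'', hc'⟩ := scal_of_both_R hC0 hCx0 ⟨w, hwz⟩
      exact hB0n (mem_Rvec_of_scal hc' hBz)
    · -- v0 = w * c ⇒ w = u0 * (c0 * c⁻¹) ⇒ C ∈ Lvec u0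
      obtain ⟨c, hcne, hc⟩ := hcolc
      refine ⟨fun j => c0 * (c⁻¹ * z j), fun i j => ?_⟩
      have hw : w i = u0 i * c0 * c⁻¹ := by
        rw [← hc0 i, hc i, mul_assoc, mul_inv_cancel₀ hcne, mul_one]
      rw [hwz i j, hw, mul_assoc, mul_assoc]
  · have hCA0 : C ≠ A0 := fun hc => hCx0 (hc ▸ ⟨u0, hux0⟩)
    rcases lemC hux0 hwz hA00 hC0 hCA0.symm (hadj A0 hA0S C hCS hCA0.symm) with hrowc | hcolc
    · exfalso
      obtain ⟨c, hc0', hc⟩ := hrowc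
      exact hCx0 (mem_Rvec_of_scal hc ⟨w, hwz⟩)
    · obtain ⟨c, hcne, hc⟩ := hcolc
      exact ⟨fun j => c * z j, fun i j => by rw [hwz i j, hc i, mul_assoc]⟩

theorem span_of_finrank_one {K V : Type*} [DivisionRing K] [AddCommGroup V] [Module K V]
    {W : Submodule K V} (h : Module.finrank K W = 1) :
    ∃ v : V, v ≠ 0 ∧ W = Submodule.span K {v} := by
  have : FiniteDimensional K W := FiniteDimensional.of_finrank_eq_succ h
  have hne : W ≠ ⊥ := by
    intro hb
    rw [hb, finrank_bot K V] at h
    exact one_ne_zero h.symm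
  obtain ⟨v, hvW, hv0⟩ := Submodule.exists_mem_ne_zero_of_ne_bot hne
  have hle : Submodule.span K {v} ≤ W := by
    rw [Submodule.span_le, Set.singleton_subset_iff]; exact hvW
  exact ⟨v, hv0, (Submodule.eq_of_le_of_finrank_le hle
    (by rw [h, finrank_span_singleton hv0])).symm⟩

theorem mem_Rsub_span_iff {m n : ℕ} {x : Fin n → D} {M : Matrix (Fin m) (Fin n) D} :
    M ∈ Rsub (Submodule.span D {x}) ↔ M ∈ Rvec x := by
  constructor
  · intro h
    have h' : ∀ i, ∃ a : D, a • x = M i := fun i => Submodule.mem_span_singleton.1 (h i)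
    choose u hu using h'
    exact ⟨u, fun i j => by rw [← hu i]; rfl⟩
  · rintro ⟨u, hu⟩ i
    exact Submodule.mem_span_singleton.2 ⟨u i, funext fun j => (hu i j).symm⟩

theorem mem_Lsub_span_iff {m n : ℕ} {t : Fin m → D} {M : Matrix (Fin m) (Fin n) D} :
    M ∈ Lsub (Submodule.span Dᵐᵒᵖ {t}) ↔ M ∈ Lvec t := by
  constructor
  · intro h
    have h' : ∀ j, ∃ a : Dᵐᵒᵖ, a • t = (fun i => M i j) :=
      fun j => Submodule.mem_span_singleton.1 (h j)
    choose v hv using h'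
    refine ⟨fun j => (v j).unop, fun i j => ?_⟩
    have := congrFun (hv j) i
    rw [← this]; rfl
  · rintro ⟨v, hv⟩ j
    refine Submodule.mem_span_singleton.2 ⟨MulOpposite.op (v j), funext fun i => ?_⟩
    rw [hv i j]; rfl

theorem rowRank_eq_one_of {m n : ℕ} {A : Matrix (Fin m) (Fin n) D} {u : Fin m → D}
    {x : Fin n → D} (hd : ∀ i j, A i j = u i * x j) (h0 : A ≠ 0) : rowRank A = 1 := by
  have hle : rowRank A ≤ 1 := rowRank_le_one_iff.2 ⟨u, x, hd⟩
  have hne : rowRank A ≠ 0 := fun hr => h0 (eq_zero_of_rowRank_eq_zero hr)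
  omega

section Phi

variable {m n p q : ℕ} (φ : Matrix (Fin m) (Fin n) D → Matrix (Fin p) (Fin q) D)

/-- image of the punctured `R`-line through `x`. -/
def CR (x : Fin n → D) : Set (Matrix (Fin p) (Fin q) D) := φ '' (Rvec x \ {0})

/-- image of the punctured `L`-line through `t`. -/
def CL (t : Fin m → D) : Set (Matrix (Fin p) (Fin q) D) := φ '' (Lvec t \ {0})

variable (hφ : ∀ A B, Adjacent A B → Adjacent (φ A) (φ B)) (h0 : φ 0 = 0)

include hφ h0 in
theorem phi_rank_one {A : Matrix (Fin m) (Fin n) D} (hA : rowRank A = 1) :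
    rowRank (φ A) = 1 := by
  have h1 : Adjacent A 0 := by unfold Adjacent; rw [sub_zero]; exact hA
  have h2 := hφ A 0 h1
  unfold Adjacent at h2
  rw [h0, sub_zero] at h2
  exact h2

include hφ h0 in
theorem CR_props {x : Fin n → D} (hx : x ≠ 0) (hm : 0 < m) :
    (CR φ x).Nonempty ∧ (∀ A ∈ CR φ x, A ≠ 0 ∧ rowRank A ≤ 1) ∧
      (∀ A ∈ CR φ x, ∀ B ∈ CR φ x, A ≠ B → rowRank (A - B) ≤ 1) := by
  obtain ⟨j0, hj0⟩ := Function.ne_iff.1 hx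
  refine ⟨⟨φ (Matrix.of fun i j => x j), ⟨Matrix.of fun i j => x j,
      ⟨⟨fun _ => 1, fun i j => (one_mul _).symm⟩, fun hc => ?_⟩, rfl⟩⟩, ?_, ?_⟩
  · exact hj0 (congrFun (congrFun (Set.mem_singleton_iff.1 hc) ⟨0, hm⟩) j0)
  · rintro A' ⟨A, ⟨⟨u, hu⟩, hA0⟩, rfl⟩
    have hA0' : A ≠ 0 := hA0
    have hr := phi_rank_one φ hφ h0 (rowRank_eq_one_of hu hA0')
    exact ⟨fun hc => by rw [hc, rowRank_zero] at hr; exact one_ne_zero hr.symm, le_of_eq hr⟩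
  · rintro A' ⟨A, ⟨⟨u, hu⟩, hA0⟩, rfl⟩ B' ⟨B, ⟨⟨v, hv⟩, hB0⟩, rfl⟩ hAB'
    have hAB : A ≠ B := fun hc => hAB' (by rw [hc])
    have hsub : ∀ i j, (A - B) i j = (u i - v i) * x j := by
      intro i j
      rw [Matrix.sub_apply, hu i j, hv i j, sub_mul]
    have hAB0 : A - B ≠ 0 := fun hc => hAB (sub_eq_zero.1 (by
      ext i j; exact congrFun (congrFun hc i) j))
    have := hφ A B (by unfold Adjacent; exact rowRank_eq_one_of hsub hAB0)
    unfold Adjacent at this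
    exact le_of_eq this

include hφ h0 in
theorem CL_props {t : Fin m → D} (ht : t ≠ 0) (hn : 0 < n) :
    (CL φ t).Nonempty ∧ (∀ A ∈ CL φ t, A ≠ 0 ∧ rowRank A ≤ 1) ∧
      (∀ A ∈ CL φ t, ∀ B ∈ CL φ t, A ≠ B → rowRank (A - B) ≤ 1) := by
  obtain ⟨i0, hi0⟩ := Function.ne_iff.1 ht
  refine ⟨⟨φ (Matrix.of fun i j => t i), ⟨Matrix.of fun i j => t i,
      ⟨⟨fun _ => 1, fun i j => (mul_one _).symm⟩, fun hc => ?_⟩, rfl⟩⟩, ?_, ?_⟩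
  · exact hi0 (congrFun (congrFun (Set.mem_singleton_iff.1 hc) i0) ⟨0, hn⟩)
  · rintro A' ⟨A, ⟨⟨v, hv⟩, hA0⟩, rfl⟩
    have hA0' : A ≠ 0 := hA0
    have hr := phi_rank_one φ hφ h0 (rowRank_eq_one_of (u := t) (x := v) hv hA0')
    exact ⟨fun hc => by rw [hc, rowRank_zero] at hr; exact one_ne_zero hr.symm, le_of_eq hr⟩
  · rintro A' ⟨A, ⟨⟨v, hv⟩, hA0⟩, rfl⟩ B' ⟨B, ⟨⟨w, hw⟩, hB0⟩, rfl⟩ hAB'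
    have hAB : A ≠ B := fun hc => hAB' (by rw [hc])
    have hsub : ∀ i j, (A - B) i j = t i * (v j - w j) := by
      intro i j
      rw [Matrix.sub_apply, hv i j, hw i j, mul_sub]
    have hAB0 : A - B ≠ 0 := fun hc => hAB (sub_eq_zero.1 (by
      ext i j; exact congrFun (congrFun hc i) j))
    have := hφ A B (by unfold Adjacent; exact rowRank_eq_one_of hsub hAB0)
    unfold Adjacent at this
    exact le_of_eq this

include hφ h0 in
theorem lineR_type {x : Fin n → D} (hx : x ≠ 0) (hm : 0 < m) :
    (∃ y : Fin q → D, y ≠ 0 ∧ CR φ x ⊆ Rvec y) ∨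
      (∃ u : Fin p → D, u ≠ 0 ∧ CR φ x ⊆ Lvec u) := by
  obtain ⟨hne, hS, hadj⟩ := CR_props φ hφ h0 hx hm
  exact cliqueLem hS hadj hne

include hφ h0 in
theorem lineL_type {t : Fin m → D} (ht : t ≠ 0) (hn : 0 < n) :
    (∃ y : Fin q → D, y ≠ 0 ∧ CL φ t ⊆ Rvec y) ∨
      (∃ u : Fin p → D, u ≠ 0 ∧ CL φ t ⊆ Lvec u) := by
  obtain ⟨hne, hS, hadj⟩ := CL_props φ hφ h0 ht hn
  exact cliqueLem hS hadj hne

include hφ h0 in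
theorem cross {x : Fin n → D} {t : Fin m → D} (hx : x ≠ 0) (ht : t ≠ 0) :
    ∃ P, P ≠ 0 ∧ P ∈ CR φ x ∧ P ∈ CL φ t := by
  obtain ⟨j0, hj0⟩ := Function.ne_iff.1 hx
  obtain ⟨i0, hi0⟩ := Function.ne_iff.1 ht
  set M : Matrix (Fin m) (Fin n) D := Matrix.of fun i j => t i * x j with hM
  have hM0 : M ≠ 0 := fun hc => (mul_ne_zero hi0 hj0) (congrFun (congrFun hc i0) j0)
  have hr := phi_rank_one φ hφ h0 (rowRank_eq_one_of (A := M) (u := t) (x := x) (fun i j => rfl) hM0)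
  refine ⟨φ M, fun hc => by rw [hc, rowRank_zero] at hr; exact one_ne_zero hr.symm,
    ⟨M, ⟨⟨t, fun i j => rfl⟩, hM0⟩, rfl⟩, ⟨M, ⟨⟨x, fun i j => rfl⟩, hM0⟩, rfl⟩⟩

include h0 in
theorem deg_of_lines {y : Fin q → D} (hy : y ≠ 0) {xx : Fin p → D} (hxx : xx ≠ 0)
    (hall : ∀ z : Fin n → D, z ≠ 0 → CR φ z ⊆ Rvec y ∪ Lvec xx) : DegZero φ := by
  refine ⟨xx, hxx, y, hy, fun M hM => ?_⟩
  obtain ⟨u, z, huz⟩ := rowRank_le_one_iff.1 hM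
  by_cases hMz : M = 0
  · rw [hMz, h0]
    exact Or.inl ⟨0, fun i j => by simp⟩
  · have hz : z ≠ 0 := by
      rintro rfl
      exact hMz (by ext i j; rw [huz i j]; exact mul_zero _)
    exact hall z hz ⟨M, ⟨⟨u, huz⟩, hMz⟩, rfl⟩

include h0 in
theorem deg_of_cols {y : Fin q → D} (hy : y ≠ 0) {xx : Fin p → D} (hxx : xx ≠ 0)
    (hall : ∀ t : Fin m → D, t ≠ 0 → CL φ t ⊆ Rvec y ∪ Lvec xx) : DegZero φ := by
  refine ⟨xx, hxx, y, hy, fun M hM => ?_⟩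
  obtain ⟨u, z, huz⟩ := rowRank_le_one_iff.1 hM
  by_cases hMz : M = 0
  · rw [hMz, h0]
    exact Or.inl ⟨0, fun i j => by simp⟩
  · have hu : u ≠ 0 := by
      rintro rfl
      exact hMz (by ext i j; rw [huz i j]; exact zero_mul _)
    exact hall u hu ⟨M, ⟨⟨z, huz⟩, hMz⟩, rfl⟩

theorem propagateR {y y' : Fin q → D} {S S' : Set (Matrix (Fin p) (Fin q) D)}
    (hP : ∃ P, P ≠ 0 ∧ P ∈ S ∧ P ∈ S') (h1 : S ⊆ Rvec y) (h2 : S' ⊆ Rvec y') :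
    S' ⊆ Rvec y := by
  obtain ⟨P, hP0, hPS, hPS'⟩ := hP
  obtain ⟨c, hc0, hc⟩ := scal_of_both_R hP0 (h1 hPS) (h2 hPS')
  exact fun A hA => mem_Rvec_of_scal hc (h2 hA)

theorem propagateL {t t' : Fin p → D} {S S' : Set (Matrix (Fin p) (Fin q) D)}
    (hP : ∃ P, P ≠ 0 ∧ P ∈ S ∧ P ∈ S') (h1 : S ⊆ Lvec t) (h2 : S' ⊆ Lvec t') :
    S' ⊆ Lvec t := by
  obtain ⟨P, hP0, hPS, hPS'⟩ := hP
  obtain ⟨c, hc0, hc⟩ := scal_of_both_L hP0 (h1 hPS) (h2 hPS')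
  exact fun A hA => mem_Lvec_of_scal hc (h2 hA)

end Phi

section Main

variable {m n p q : ℕ} (φ : Matrix (Fin m) (Fin n) D → Matrix (Fin p) (Fin q) D)
variable (hφ : ∀ A B, Adjacent A B → Adjacent (φ A) (φ B)) (h0 : φ 0 = 0)

include hφ h0 in
theorem dichotomy (hm : 0 < m) (hn : 0 < n) (hp : 0 < p) (hq : 0 < q)
    (hdeg : ¬ DegZero φ) :
    ((∀ x : Fin n → D, x ≠ 0 → ∃ y : Fin q → D, y ≠ 0 ∧ CR φ x ⊆ Rvec y) ∧
      (∀ t : Fin m → D, t ≠ 0 → ∃ u : Fin p → D, u ≠ 0 ∧ CL φ t ⊆ Lvec u)) ∨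
    ((∀ x : Fin n → D, x ≠ 0 → ∃ u : Fin p → D, u ≠ 0 ∧ CR φ x ⊆ Lvec u) ∧
      (∀ t : Fin m → D, t ≠ 0 → ∃ y : Fin q → D, y ≠ 0 ∧ CL φ t ⊆ Rvec y)) := by
  have hone_p : (fun _ => (1:D)) ≠ (0 : Fin p → D) :=
    Function.ne_iff.2 ⟨⟨0, hp⟩, one_ne_zero⟩
  have hone_q : (fun _ => (1:D)) ≠ (0 : Fin q → D) :=
    Function.ne_iff.2 ⟨⟨0, hq⟩, one_ne_zero⟩
  by_cases hSR : ∀ x : Fin n → D, x ≠ 0 → ∃ y : Fin q → D, y ≠ 0 ∧ CR φ x ⊆ Rvec y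
  · left
    refine ⟨hSR, fun t ht => ?_⟩
    rcases lineL_type φ hφ h0 ht hn with ⟨ys, hys, hsubt⟩ | hL
    · -- every R-line then maps into Rvec ys : degenerate
      exfalso
      apply hdeg
      apply deg_of_lines φ h0 hys hone_p
      intro z hz
      obtain ⟨yz, hyz, hsz⟩ := hSR z hz
      have : CR φ z ⊆ Rvec ys :=
        propagateR (by
          obtain ⟨P, hP0, hPx, hPt⟩ := cross φ hφ h0 hz ht
          exact ⟨P, hP0, hPt, hPx⟩) hsubt hsz
      exact fun A hA => Or.inl (this hA)
    · exact hL
  · push_neg at hSR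
    obtain ⟨xs, hxs, hnotR⟩ := hSR
    have hxsL : ∃ u : Fin p → D, u ≠ 0 ∧ CR φ xs ⊆ Lvec u := by
      rcases lineR_type φ hφ h0 hxs hm with ⟨y, hy, hs⟩ | h
      · exact absurd hs (hnotR y hy)
      · exact h
    obtain ⟨us, hus, hsubs⟩ := hxsL
    right
    have hTR : ∀ t : Fin m → D, t ≠ 0 → ∃ y : Fin q → D, y ≠ 0 ∧ CL φ t ⊆ Rvec y := by
      intro t0 ht0
      by_contra hno
      push_neg at hno
      have ht0L : ∃ u : Fin p → D, u ≠ 0 ∧ CL φ t0 ⊆ Lvec u := by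
        rcases lineL_type φ hφ h0 ht0 hn with ⟨y, hy, hs⟩ | h
        · exact absurd hs (hno y hy)
        · exact h
      obtain ⟨u1, hu1, hsubt0⟩ := ht0L
      -- CL t0 is inside Lvec us
      have ht0us : CL φ t0 ⊆ Lvec us :=
        propagateL (by
          obtain ⟨P, hP0, hPx, hPt⟩ := cross φ hφ h0 hxs ht0
          exact ⟨P, hP0, hPx, hPt⟩) hsubs hsubt0
      -- each R-line is R-assignable or inside Lvec us
      have hxdicho : ∀ z : Fin n → D, z ≠ 0 →
          (∃ y : Fin q → D, y ≠ 0 ∧ CR φ z ⊆ Rvec y) ∨ CR φ z ⊆ Lvec us := by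
        intro z hz
        rcases lineR_type φ hφ h0 hz hm with h | ⟨u2, hu2, hs2⟩
        · exact Or.inl h
        · refine Or.inr (propagateL (by
            obtain ⟨P, hP0, hPx, hPt⟩ := cross φ hφ h0 hz ht0
            exact ⟨P, hP0, hPt, hPx⟩) ht0us hs2)
      by_cases hz1 : ∃ z : Fin n → D, z ≠ 0 ∧ ∃ y : Fin q → D, y ≠ 0 ∧ CR φ z ⊆ Rvec y
      · obtain ⟨z1, hz1n, y1, hy1, hs1⟩ := hz1
        by_cases ht1 : ∃ t1 : Fin m → D, t1 ≠ 0 ∧ ∃ y : Fin q → D, y ≠ 0 ∧ CL φ t1 ⊆ Rvec y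
        · obtain ⟨t1, ht1n, y2, hy2, hst1⟩ := ht1
          apply hdeg
          apply deg_of_lines φ h0 hy2 hus
          intro z hz
          rcases hxdicho z hz with ⟨yz, hyz, hsz⟩ | hL
          · have : CR φ z ⊆ Rvec y2 :=
              propagateR (by
                obtain ⟨P, hP0, hPx, hPt⟩ := cross φ hφ h0 hz ht1n
                exact ⟨P, hP0, hPt, hPx⟩) hst1 hsz
            exact fun A hA => Or.inl (this hA)
          · exact fun A hA => Or.inr (hL hA)
        · push_neg at ht1
          apply hdeg
          apply deg_of_cols φ h0 hone_q hus
          intro t ht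
          have : CL φ t ⊆ Lvec us := by
            rcases lineL_type φ hφ h0 ht hn with ⟨y, hy, hs⟩ | ⟨u2, hu2, hs2⟩
            · exact absurd hs (ht1 t ht y hy)
            · exact propagateL (by
                obtain ⟨P, hP0, hPx, hPt⟩ := cross φ hφ h0 hxs ht
                exact ⟨P, hP0, hPx, hPt⟩) hsubs hs2
          exact fun A hA => Or.inr (this hA)
      · push_neg at hz1
        apply hdeg
        apply deg_of_lines φ h0 hone_q hus
        intro z hz
        rcases hxdicho z hz with ⟨y, hy, hs⟩ | h
        · exact absurd hs (hz1 z hz y hy)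
        · exact fun A hA => Or.inr (h hA)
    refine ⟨fun z hz => ?_, hTR⟩
    rcases lineR_type φ hφ h0 hz hm with ⟨y', hy', hs'⟩ | h
    · exfalso
      apply hdeg
      apply deg_of_cols φ h0 hy' hone_p
      intro t ht
      obtain ⟨yt, hyt, hst⟩ := hTR t ht
      have : CL φ t ⊆ Rvec y' :=
        propagateR (by
          obtain ⟨P, hP0, hPx, hPt⟩ := cross φ hφ h0 hz ht
          exact ⟨P, hP0, hPx, hPt⟩) hs' hst
      exact fun A hA => Or.inl (this hA)
    · exact h

end Main

/-- Corollary 3.10. If `φ` is an adjacency preserver with `φ(0) = 0`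
that is not degenerate with respect to `0`, then either there are nonconstant maps
`α, β` between projective spaces with `φ(R_d) ⊆ R_{α(d)}` and `φ(L_e) ⊆ L_{β(e)}`, or
there are nonconstant `α, β` with `φ(R_d) ⊆ L_{α(d)}` and `φ(L_e) ⊆ R_{β(e)}`. -/
theorem stmt8 (m n p q : ℕ) (hm : 0 < m) (hn : 0 < n) (hp : 0 < p) (hq : 0 < q)
    (φ : Matrix (Fin m) (Fin n) D → Matrix (Fin p) (Fin q) D)
    (hφ : ∀ A B, Adjacent A B → Adjacent (φ A) (φ B)) (h0 : φ 0 = 0)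
    (hdeg : ¬ DegZero φ) :
    (∃ α : {d : Submodule D (Fin n → D) // Module.finrank D d = 1} →
           {d' : Submodule D (Fin q → D) // Module.finrank D d' = 1},
     ∃ β : {e : Submodule Dᵐᵒᵖ (Fin m → D) // Module.finrank Dᵐᵒᵖ e = 1} →
           {e' : Submodule Dᵐᵒᵖ (Fin p → D) // Module.finrank Dᵐᵒᵖ e' = 1},
       (∃ d₁ d₂, α d₁ ≠ α d₂) ∧ (∃ e₁ e₂, β e₁ ≠ β e₂) ∧
       (∀ d, ∀ M : Matrix (Fin m) (Fin n) D, M ∈ Rsub d.1 → φ M ∈ Rsub (α d).1) ∧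
       (∀ e, ∀ M : Matrix (Fin m) (Fin n) D, M ∈ Lsub e.1 → φ M ∈ Lsub (β e).1)) ∨
    (∃ α : {d : Submodule D (Fin n → D) // Module.finrank D d = 1} →
           {e' : Submodule Dᵐᵒᵖ (Fin p → D) // Module.finrank Dᵐᵒᵖ e' = 1},
     ∃ β : {e : Submodule Dᵐᵒᵖ (Fin m → D) // Module.finrank Dᵐᵒᵖ e = 1} →
           {d' : Submodule D (Fin q → D) // Module.finrank D d' = 1},
       (∃ d₁ d₂, α d₁ ≠ α d₂) ∧ (∃ e₁ e₂, β e₁ ≠ β e₂) ∧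
       (∀ d, ∀ M : Matrix (Fin m) (Fin n) D, M ∈ Rsub d.1 → φ M ∈ Lsub (α d).1) ∧
       (∀ e, ∀ M : Matrix (Fin m) (Fin n) D, M ∈ Lsub e.1 → φ M ∈ Rsub (β e).1)) := by
  have hone_p : (fun _ => (1:D)) ≠ (0 : Fin p → D) :=
    Function.ne_iff.2 ⟨⟨0, hp⟩, one_ne_zero⟩
  have hone_q : (fun _ => (1:D)) ≠ (0 : Fin q → D) :=
    Function.ne_iff.2 ⟨⟨0, hq⟩, one_ne_zero⟩
  have hone_n : (fun _ => (1:D)) ≠ (0 : Fin n → D) :=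
    Function.ne_iff.2 ⟨⟨0, hn⟩, one_ne_zero⟩
  have hone_m : (fun _ => (1:D)) ≠ (0 : Fin m → D) :=
    Function.ne_iff.2 ⟨⟨0, hm⟩, one_ne_zero⟩
  rcases dichotomy φ hφ h0 hm hn hp hq hdeg with ⟨hA, hB⟩ | ⟨hA, hB⟩
  · -- case (i)
    left
    have hd : ∀ d : {d : Submodule D (Fin n → D) // Module.finrank D d = 1},
        ∃ y : Fin q → D, y ≠ 0 ∧ ∀ M ∈ Rsub d.1, φ M ∈ Rvec y := by
      intro d
      obtain ⟨x, hx0, hxspan⟩ := span_of_finrank_one d.2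
      obtain ⟨y, hy0, hsub⟩ := hA x hx0
      refine ⟨y, hy0, fun M hM => ?_⟩
      have hMx : M ∈ Rvec x := mem_Rsub_span_iff.1 (hxspan ▸ hM)
      by_cases hM0 : M = 0
      · rw [hM0, h0]; exact ⟨0, fun i j => by simp⟩
      · exact hsub ⟨M, ⟨hMx, hM0⟩, rfl⟩
    have he : ∀ e : {e : Submodule Dᵐᵒᵖ (Fin m → D) // Module.finrank Dᵐᵒᵖ e = 1},
        ∃ u : Fin p → D, u ≠ 0 ∧ ∀ M ∈ Lsub e.1, φ M ∈ Lvec u := by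
      intro e
      obtain ⟨t, ht0, htspan⟩ := span_of_finrank_one e.2
      obtain ⟨u, hu0, hsub⟩ := hB t ht0
      refine ⟨u, hu0, fun M hM => ?_⟩
      have hMt : M ∈ Lvec t := mem_Lsub_span_iff.1 (htspan ▸ hM)
      by_cases hM0 : M = 0
      · rw [hM0, h0]; exact ⟨0, fun i j => by simp⟩
      · exact hsub ⟨M, ⟨hMt, hM0⟩, rfl⟩
    choose Y hY0 hY using hd
    choose U hU0 hU using he
    refine ⟨fun d => ⟨Submodule.span D {Y d}, finrank_span_singleton (hY0 d)⟩,
      fun e => ⟨Submodule.span Dᵐᵒᵖ {U e}, finrank_span_singleton (hU0 e)⟩, ?_, ?_,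
      fun d M hM => mem_Rsub_span_iff.2 (hY d M hM),
      fun e M hM => mem_Lsub_span_iff.2 (hU e M hM)⟩
    · by_contra hc
      push_neg at hc
      set d0 : {d : Submodule D (Fin n → D) // Module.finrank D d = 1} :=
        ⟨Submodule.span D {fun _ => (1:D)}, finrank_span_singleton hone_n⟩ with hd0
      apply hdeg
      refine ⟨fun _ => 1, hone_p, Y d0, hY0 d0, fun M hM => ?_⟩
      obtain ⟨u, z, huz⟩ := rowRank_le_one_iff.1 hM
      by_cases hM0 : M = 0
      · rw [hM0, h0]; exact Or.inl ⟨0, fun i j => by simp⟩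
      · have hz : z ≠ 0 := by
          rintro rfl
          exact hM0 (by ext i j; rw [huz i j]; exact mul_zero _)
        set d : {d : Submodule D (Fin n → D) // Module.finrank D d = 1} :=
          ⟨Submodule.span D {z}, finrank_span_singleton hz⟩ with hd'
        have h1 : φ M ∈ Rvec (Y d) := hY d M (mem_Rsub_span_iff.2 ⟨u, huz⟩)
        have h2 : Submodule.span D {Y d} = Submodule.span D {Y d0} :=
          congrArg Subtype.val (hc d d0)
        exact Or.inl (mem_Rsub_span_iff.1 (h2 ▸ mem_Rsub_span_iff.2 h1))
    · by_contra hc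
      push_neg at hc
      set e0 : {e : Submodule Dᵐᵒᵖ (Fin m → D) // Module.finrank Dᵐᵒᵖ e = 1} :=
        ⟨Submodule.span Dᵐᵒᵖ {fun _ => (1:D)}, finrank_span_singleton hone_m⟩ with he0
      apply hdeg
      refine ⟨U e0, hU0 e0, fun _ => 1, hone_q, fun M hM => ?_⟩
      obtain ⟨u, z, huz⟩ := rowRank_le_one_iff.1 hM
      by_cases hM0 : M = 0
      · rw [hM0, h0]; exact Or.inl ⟨0, fun i j => by simp⟩
      · have hu : u ≠ 0 := by
          rintro rfl
          exact hM0 (by ext i j; rw [huz i j]; exact zero_mul _)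
        set e : {e : Submodule Dᵐᵒᵖ (Fin m → D) // Module.finrank Dᵐᵒᵖ e = 1} :=
          ⟨Submodule.span Dᵐᵒᵖ {u}, finrank_span_singleton hu⟩ with he'
        have h1 : φ M ∈ Lvec (U e) := hU e M (mem_Lsub_span_iff.2 ⟨z, huz⟩)
        have h2 : Submodule.span Dᵐᵒᵖ {U e} = Submodule.span Dᵐᵒᵖ {U e0} :=
          congrArg Subtype.val (hc e e0)
        exact Or.inr (mem_Lsub_span_iff.1 (h2 ▸ mem_Lsub_span_iff.2 h1))
  · -- case (ii)
    right
    have hd : ∀ d : {d : Submodule D (Fin n → D) // Module.finrank D d = 1},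
        ∃ u : Fin p → D, u ≠ 0 ∧ ∀ M ∈ Rsub d.1, φ M ∈ Lvec u := by
      intro d
      obtain ⟨x, hx0, hxspan⟩ := span_of_finrank_one d.2
      obtain ⟨u, hu0, hsub⟩ := hA x hx0
      refine ⟨u, hu0, fun M hM => ?_⟩
      have hMx : M ∈ Rvec x := mem_Rsub_span_iff.1 (hxspan ▸ hM)
      by_cases hM0 : M = 0
      · rw [hM0, h0]; exact ⟨0, fun i j => by simp⟩
      · exact hsub ⟨M, ⟨hMx, hM0⟩, rfl⟩
    have he : ∀ e : {e : Submodule Dᵐᵒᵖ (Fin m → D) // Module.finrank Dᵐᵒᵖ e = 1},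
        ∃ y : Fin q → D, y ≠ 0 ∧ ∀ M ∈ Lsub e.1, φ M ∈ Rvec y := by
      intro e
      obtain ⟨t, ht0, htspan⟩ := span_of_finrank_one e.2
      obtain ⟨y, hy0, hsub⟩ := hB t ht0
      refine ⟨y, hy0, fun M hM => ?_⟩
      have hMt : M ∈ Lvec t := mem_Lsub_span_iff.1 (htspan ▸ hM)
      by_cases hM0 : M = 0
      · rw [hM0, h0]; exact ⟨0, fun i j => by simp⟩
      · exact hsub ⟨M, ⟨hMt, hM0⟩, rfl⟩
    choose U hU0 hU using hd
    choose Y hY0 hY using he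
    refine ⟨fun d => ⟨Submodule.span Dᵐᵒᵖ {U d}, finrank_span_singleton (hU0 d)⟩,
      fun e => ⟨Submodule.span D {Y e}, finrank_span_singleton (hY0 e)⟩, ?_, ?_,
      fun d M hM => mem_Lsub_span_iff.2 (hU d M hM),
      fun e M hM => mem_Rsub_span_iff.2 (hY e M hM)⟩
    · by_contra hc
      push_neg at hc
      set d0 : {d : Submodule D (Fin n → D) // Module.finrank D d = 1} :=
        ⟨Submodule.span D {fun _ => (1:D)}, finrank_span_singleton hone_n⟩ with hd0
      apply hdeg
      refine ⟨U d0, hU0 d0, fun _ => 1, hone_q, fun M hM => ?_⟩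
      obtain ⟨u, z, huz⟩ := rowRank_le_one_iff.1 hM
      by_cases hM0 : M = 0
      · rw [hM0, h0]; exact Or.inl ⟨0, fun i j => by simp⟩
      · have hz : z ≠ 0 := by
          rintro rfl
          exact hM0 (by ext i j; rw [huz i j]; exact mul_zero _)
        set d : {d : Submodule D (Fin n → D) // Module.finrank D d = 1} :=
          ⟨Submodule.span D {z}, finrank_span_singleton hz⟩ with hd'
        have h1 : φ M ∈ Lvec (U d) := hU d M (mem_Rsub_span_iff.2 ⟨u, huz⟩)
        have h2 : Submodule.span Dᵐᵒᵖ {U d} = Submodule.span Dᵐᵒᵖ {U d0} :=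
          congrArg Subtype.val (hc d d0)
        exact Or.inr (mem_Lsub_span_iff.1 (h2 ▸ mem_Lsub_span_iff.2 h1))
    · by_contra hc
      push_neg at hc
      set e0 : {e : Submodule Dᵐᵒᵖ (Fin m → D) // Module.finrank Dᵐᵒᵖ e = 1} :=
        ⟨Submodule.span Dᵐᵒᵖ {fun _ => (1:D)}, finrank_span_singleton hone_m⟩ with he0
      apply hdeg
      refine ⟨fun _ => 1, hone_p, Y e0, hY0 e0, fun M hM => ?_⟩
      obtain ⟨u, z, huz⟩ := rowRank_le_one_iff.1 hM
      by_cases hM0 : M = 0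
      · rw [hM0, h0]; exact Or.inl ⟨0, fun i j => by simp⟩
      · have hu : u ≠ 0 := by
          rintro rfl
          exact hM0 (by ext i j; rw [huz i j]; exact zero_mul _)
        set e : {e : Submodule Dᵐᵒᵖ (Fin m → D) // Module.finrank Dᵐᵒᵖ e = 1} :=
          ⟨Submodule.span Dᵐᵒᵖ {u}, finrank_span_singleton hu⟩ with he'
        have h1 : φ M ∈ Rvec (Y e) := hY e M (mem_Lsub_span_iff.2 ⟨z, huz⟩)
        have h2 : Submodule.span D {Y e} = Submodule.span D {Y e0} :=
          congrArg Subtype.val (hc e e0)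
        exact Or.inl (mem_Rsub_span_iff.1 (h2 ▸ mem_Rsub_span_iff.2 h1))
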